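/- arXiv:1907.11382 — 4 statements merged into one kernel-verified Lean document; each statement's English description precedes it below -/
import Mathlib

section
/- Let E be a complex Hilbert space, let H be a bounded selfadjoint operator on E with H² ≥ g²·1 for some g > 0, let D₀ be a bounded operator on E, and let κ > 0. For each t ∈ [0,1] let T_t be the bounded operator on the Hilbert space direct sum E ⊕ E given in block form by T_t = [[−H, tκD₀*], [tκD₀, H]]. Then T_t is selfadjoint and satisfies T_t² ≥ (g² − κ‖D₀H − HD₀‖)·1. In particular, if κ‖D₀H − HD₀‖ < g², then T_t is invertible for every t ∈ [0,1]. -/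
open ContinuousLinearMap in
/-- The block operator `[[A, B], [C, D]]` on the Hilbert space direct sum `E ⊕ F`
(realized as `WithLp 2 (E × F)`), acting by `(x, y) ↦ (A x + B y, C x + D y)`. -/
noncomputable def blockOp {E F : Type*} [NormedAddCommGroup E] [InnerProductSpace ℂ E]
    [NormedAddCommGroup F] [InnerProductSpace ℂ F]
    (A : E →L[ℂ] E) (B : F →L[ℂ] E) (C : E →L[ℂ] F) (D : F →L[ℂ] F) :
    WithLp 2 (E × F) →L[ℂ] WithLp 2 (E × F) :=
  ((WithLp.prodContinuousLinearEquiv 2 ℂ E F).symm.toContinuousLinearMap.comp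
    ((A.comp (fst ℂ E F) + B.comp (snd ℂ E F)).prod
      (C.comp (fst ℂ E F) + D.comp (snd ℂ E F)))).comp
    (WithLp.prodContinuousLinearEquiv 2 ℂ E F).toContinuousLinearMap

/-!
For `x = (a, b)`, expanding `‖T_t x‖²` gives `‖H a‖² + ‖H b‖² ≥ g² ‖x‖²` from the diagonal,
the nonnegative terms `‖tκ D₀ a‖² + ‖tκ D₀* b‖²`, and cross terms that combine into the commutator,
`-2 tκ Re ⟪(D₀H - HD₀) a, b⟫ ≥ -tκ ‖D₀H - HD₀‖ ‖x‖²`. As `T_t` is selfadjoint,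
`⟪T_t² x, x⟫ = ‖T_t x‖²`, so this is the operator inequality; when its constant is positive,
`T_t²` is coercive, hence invertible, and so is `T_t`.
-/

open scoped ComplexInnerProductSpace
open ContinuousLinearMap

section Block

variable {E F : Type*} [NormedAddCommGroup E] [InnerProductSpace ℂ E]
  [NormedAddCommGroup F] [InnerProductSpace ℂ F]

@[simp]
lemma blockOp_apply_fst (A : E →L[ℂ] E) (B : F →L[ℂ] E) (C : E →L[ℂ] F) (D : F →L[ℂ] F)
    (x : WithLp 2 (E × F)) : (blockOp A B C D x).fst = A x.fst + B x.snd := rfl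

@[simp]
lemma blockOp_apply_snd (A : E →L[ℂ] E) (B : F →L[ℂ] E) (C : E →L[ℂ] F) (D : F →L[ℂ] F)
    (x : WithLp 2 (E × F)) : (blockOp A B C D x).snd = C x.fst + D x.snd := rfl

variable [CompleteSpace E] [CompleteSpace F]

lemma isSelfAdjoint_blockOp {A : E →L[ℂ] E} {D : F →L[ℂ] F} (hA : IsSelfAdjoint A)
    (hD : IsSelfAdjoint D) (C : E →L[ℂ] F) : IsSelfAdjoint (blockOp A (adjoint C) C D) := by
  have hA' : ∀ u v, ⟪A u, v⟫ = ⟪u, A v⟫ := hA.isSymmetric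
  have hD' : ∀ u v, ⟪D u, v⟫ = ⟪u, D v⟫ := hD.isSymmetric
  rw [isSelfAdjoint_iff_isSymmetric]
  intro x y
  simp only [coe_coe, WithLp.prod_inner_apply, WithLp.ofLp_fst, WithLp.ofLp_snd,
    blockOp_apply_fst, blockOp_apply_snd, inner_add_left, inner_add_right, adjoint_inner_left,
    adjoint_inner_right, hA', hD']
  ring

lemma norm_blockOp_apply_sq (H₁ : E →L[ℂ] E) {H₂ : F →L[ℂ] F}
    (hH₂ : IsSelfAdjoint H₂) (C : E →L[ℂ] F) (x : WithLp 2 (E × F)) :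
    ‖blockOp (-H₁) (adjoint C) C H₂ x‖ ^ 2 =
      ‖H₁ x.fst‖ ^ 2 + ‖adjoint C x.snd‖ ^ 2 + ‖C x.fst‖ ^ 2 + ‖H₂ x.snd‖ ^ 2 -
        2 * RCLike.re ⟪(C ∘L H₁ - H₂ ∘L C) x.fst, x.snd⟫ := by
  have h₁ : ⟪-H₁ x.fst, adjoint C x.snd⟫ = -⟪C (H₁ x.fst), x.snd⟫ := by
    rw [inner_neg_left, adjoint_inner_right]
  have h₂ : ⟪C x.fst, H₂ x.snd⟫ = ⟪H₂ (C x.fst), x.snd⟫ := (hH₂.isSymmetric _ _).symm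
  rw [WithLp.prod_norm_sq_eq_of_L2, blockOp_apply_fst, blockOp_apply_snd, norm_add_sq (𝕜 := ℂ),
    norm_add_sq (𝕜 := ℂ), neg_apply, h₁, h₂, norm_neg, sub_apply, comp_apply, comp_apply,
    inner_sub_left, map_sub, map_neg]
  ring

lemma mul_norm_sq_le_norm_blockOp_apply_sq {H₁ : E →L[ℂ] E} {H₂ : F →L[ℂ] F}
    (hH₂ : IsSelfAdjoint H₂) (C : E →L[ℂ] F) {c : ℝ} (hc₁ : ∀ v, c * ‖v‖ ^ 2 ≤ ‖H₁ v‖ ^ 2)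
    (hc₂ : ∀ w, c * ‖w‖ ^ 2 ≤ ‖H₂ w‖ ^ 2) (x : WithLp 2 (E × F)) :
    (c - ‖C ∘L H₁ - H₂ ∘L C‖) * ‖x‖ ^ 2 ≤ ‖blockOp (-H₁) (adjoint C) C H₂ x‖ ^ 2 := by
  set K := C ∘L H₁ - H₂ ∘L C
  have hcross : RCLike.re ⟪K x.fst, x.snd⟫ ≤ ‖K‖ * ‖x.fst‖ * ‖x.snd‖ :=
    calc RCLike.re ⟪K x.fst, x.snd⟫ ≤ ‖K x.fst‖ * ‖x.snd‖ := re_inner_le_norm _ _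
      _ ≤ ‖K‖ * ‖x.fst‖ * ‖x.snd‖ := by gcongr; exact K.le_opNorm _
  have hamgm : 2 * ‖x.fst‖ * ‖x.snd‖ ≤ ‖x.fst‖ ^ 2 + ‖x.snd‖ ^ 2 := two_mul_le_add_sq _ _
  rw [norm_blockOp_apply_sq H₁ hH₂, WithLp.prod_norm_sq_eq_of_L2]
  nlinarith [hc₁ x.fst, hc₂ x.snd, sq_nonneg ‖adjoint C x.snd‖, sq_nonneg ‖C x.fst‖,
    mul_le_mul_of_nonneg_left hamgm (norm_nonneg K)]

end Block

section Hilbert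

variable {E : Type*} [NormedAddCommGroup E] [InnerProductSpace ℂ E] [CompleteSpace E]

lemma IsSelfAdjoint.ofReal_smul_one_le_sq_iff {T : E →L[ℂ] E} (hT : IsSelfAdjoint T) (c : ℝ) :
    (c : ℂ) • (1 : E →L[ℂ] E) ≤ T ^ 2 ↔ ∀ x, c * ‖x‖ ^ 2 ≤ ‖T x‖ ^ 2 := by
  have hc : IsSelfAdjoint (c : ℂ) := Complex.conj_ofReal c
  have hsa : IsSelfAdjoint (T ^ 2 - (c : ℂ) • 1) := (hT.pow 2).sub (hc.smul (.one _))
  have hre (x : E) : reApplyInnerSelf (T ^ 2 - (c : ℂ) • 1) x = ‖T x‖ ^ 2 - c * ‖x‖ ^ 2 := by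
    have hTx : ⟪(T ^ 2) x, x⟫ = ⟪T x, T x⟫ := hT.isSymmetric _ _
    rw [reApplyInnerSelf_apply, sub_apply, inner_sub_left, hTx, smul_apply,
      one_apply_eq_self, inner_smul_left, Complex.conj_ofReal, map_sub,
      inner_self_eq_norm_sq, RCLike.re_to_complex, Complex.re_ofReal_mul, ← RCLike.re_to_complex,
      inner_self_eq_norm_sq]
  simp only [le_def, isPositive_def', hsa, hre, sub_nonneg, true_and]

lemma IsSelfAdjoint.isUnit_of_mul_norm_sq_le {T : E →L[ℂ] E} (hT : IsSelfAdjoint T) {c : ℝ}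
    (hc : 0 < c) (h : ∀ x, c * ‖x‖ ^ 2 ≤ ‖T x‖ ^ 2) : IsUnit T := by
  refine (isUnit_pow_iff two_ne_zero).mp <| isUnit_of_forall_le_norm_inner_map (T ^ 2)
    (c := c.toNNReal) (Real.toNNReal_pos.mpr hc) fun x => ?_
  have hTx : ⟪(T ^ 2) x, x⟫ = ⟪T x, T x⟫ := hT.isSymmetric _ _
  rw [hTx, ← inner_self_re_eq_norm, inner_self_eq_norm_sq, Real.coe_toNNReal _ hc.le, mul_comm]
  exact h x

end Hilbert

theorem localizer_path_gap_general {E : Type*} [NormedAddCommGroup E] [InnerProductSpace ℂ E]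
    [CompleteSpace E] (H D₀ : E →L[ℂ] E) (hH : IsSelfAdjoint H)
    (g : ℝ) (hH2 : ((g ^ 2 : ℝ) : ℂ) • (1 : E →L[ℂ] E) ≤ H ^ 2)
    (κ : ℝ) (hκ : 0 < κ) (t : ℝ) (ht : t ∈ Set.Icc (0 : ℝ) 1) :
    IsSelfAdjoint (blockOp (-H) (((t * κ : ℝ) : ℂ) • ContinuousLinearMap.adjoint D₀)
        (((t * κ : ℝ) : ℂ) • D₀) H) ∧
    ((g ^ 2 - κ * ‖D₀ * H - H * D₀‖ : ℝ) : ℂ) •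
        (1 : WithLp 2 (E × E) →L[ℂ] WithLp 2 (E × E)) ≤
      (blockOp (-H) (((t * κ : ℝ) : ℂ) • ContinuousLinearMap.adjoint D₀)
        (((t * κ : ℝ) : ℂ) • D₀) H) ^ 2 ∧
    (κ * ‖D₀ * H - H * D₀‖ < g ^ 2 →
      IsUnit (blockOp (-H) (((t * κ : ℝ) : ℂ) • ContinuousLinearMap.adjoint D₀)
        (((t * κ : ℝ) : ℂ) • D₀) H)) := by
  obtain ⟨ht₀, ht₁⟩ := ht
  set s := t * κ
  have hs : 0 ≤ s := mul_nonneg ht₀ hκ.le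
  have hsκ : s ≤ κ := mul_le_of_le_one_left hκ.le ht₁
  have hadj : (s : ℂ) • adjoint D₀ = adjoint ((s : ℂ) • D₀) := by
    rw [map_smulₛₗ, Complex.conj_ofReal]
  have hcomm : ‖((s : ℂ) • D₀) ∘L H - H ∘L ((s : ℂ) • D₀)‖ = s * ‖D₀ * H - H * D₀‖ := by
    rw [smul_comp, comp_smul, ← smul_sub, norm_smul, Complex.norm_real, Real.norm_of_nonneg hs]
    rfl
  have hHg := (hH.ofReal_smul_one_le_sq_iff _).mp hH2
  have hbound (x : WithLp 2 (E × E)) :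
      (g ^ 2 - κ * ‖D₀ * H - H * D₀‖) * ‖x‖ ^ 2 ≤
        ‖blockOp (-H) ((s : ℂ) • adjoint D₀) ((s : ℂ) • D₀) H x‖ ^ 2 := by
    refine le_trans ?_ (hadj ▸ mul_norm_sq_le_norm_blockOp_apply_sq hH _ hHg hHg x)
    rw [hcomm]
    gcongr
  have hT : IsSelfAdjoint (blockOp (-H) ((s : ℂ) • adjoint D₀) ((s : ℂ) • D₀) H) :=
    hadj ▸ isSelfAdjoint_blockOp hH.neg hH _
  exact ⟨hT, (hT.ofReal_smul_one_le_sq_iff _).mpr hbound,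
    fun hgap => hT.isUnit_of_mul_norm_sq_le (sub_pos.mpr hgap) hbound⟩

/-- If `H` is a bounded selfadjoint operator with `H² ≥ g²·1`, `D₀` a bounded operator, `κ > 0`,
then for every `t ∈ [0,1]` the block operator `T_t = [[−H, tκD₀*], [tκD₀, H]]` is selfadjoint,
satisfies `T_t² ≥ (g² − κ‖D₀H − HD₀‖)·1`, and is invertible if `κ‖D₀H − HD₀‖ < g²`. -/
theorem localizer_path_gap {E : Type*} [NormedAddCommGroup E] [InnerProductSpace ℂ E]
    [CompleteSpace E] (H D₀ : E →L[ℂ] E) (hH : IsSelfAdjoint H)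
    (g : ℝ) (hg : 0 < g) (hH2 : ((g ^ 2 : ℝ) : ℂ) • (1 : E →L[ℂ] E) ≤ H ^ 2)
    (κ : ℝ) (hκ : 0 < κ) (t : ℝ) (ht : t ∈ Set.Icc (0 : ℝ) 1) :
    IsSelfAdjoint (blockOp (-H) (((t * κ : ℝ) : ℂ) • ContinuousLinearMap.adjoint D₀)
        (((t * κ : ℝ) : ℂ) • D₀) H) ∧
    ((g ^ 2 - κ * ‖D₀ * H - H * D₀‖ : ℝ) : ℂ) •
        (1 : WithLp 2 (E × E) →L[ℂ] WithLp 2 (E × E)) ≤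
      (blockOp (-H) (((t * κ : ℝ) : ℂ) • ContinuousLinearMap.adjoint D₀)
        (((t * κ : ℝ) : ℂ) • D₀) H) ^ 2 ∧
    (κ * ‖D₀ * H - H * D₀‖ < g ^ 2 →
      IsUnit (blockOp (-H) (((t * κ : ℝ) : ℂ) • ContinuousLinearMap.adjoint D₀)
        (((t * κ : ℝ) : ℂ) • D₀) H)) :=
  localizer_path_gap_general H D₀ hH g hH2 κ hκ t ht
end

section
/- Let E be a complex Hilbert space and let D₀ be a bounded, normal, invertible operator on E with D₀*D₀ ≥ ρ²·1 for some ρ > 0. Let |D₀| denote the positive square root of D₀*D₀ and set F = D₀·|D₀|⁻¹. Then F is unitary, and for every λ ∈ [0,1] the operator X_λ = (1−λ)ρF + λD₀ satisfies X_λ*X_λ ≥ ρ²·1 and X_λX_λ* ≥ ρ²·1; in particular X_λ is invertible. -/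
/-!
Since `D₀` is invertible, its polar decomposition `D₀ = F |D₀|` has a unitary phase `F`, and
the path factors as `X_λ = F B_λ` with `B_λ = (1 - λ) ρ + λ |D₀|` selfadjoint. The bound
`D₀* D₀ ≥ ρ²` gives `|D₀| ≥ ρ` on the spectrum, hence `B_λ ≥ ρ > 0`. Thus `X_λ* X_λ = B_λ² ≥ ρ²`,
`X_λ X_λ* = F B_λ² F* ≥ ρ²`, and `X_λ` is a unit as a unitary times a strictly positive element.
-/

section CStarAlgebra

variable {A : Type*} [CStarAlgebra A] [PartialOrder A] [StarOrderedRing A]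

lemma cfc_sqrt_star_mul_self_eq_cfcAbs (a : A) : cfc Real.sqrt (star a * a) = CFC.abs a := by
  rw [CFC.abs, CFC.sqrt_eq_real_sqrt _ (star_mul_self_nonneg a), cfcₙ_eq_cfc]

lemma algebraMap_le_cfcAbs {a : A} {r : ℝ} (hr : 0 ≤ r)
    (h : algebraMap ℝ A (r ^ 2) ≤ star a * a) : algebraMap ℝ A r ≤ CFC.abs a := by
  have hsa : IsSelfAdjoint (star a * a) := .star_mul_self a
  rw [← cfc_sqrt_star_mul_self_eq_cfcAbs, algebraMap_le_cfc_iff _ _ _ (by fun_prop) hsa]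
  intro x hx
  rw [← Real.sqrt_sq hr]
  exact Real.sqrt_le_sqrt ((algebraMap_le_iff_le_spectrum hsa).mp h x hx)

lemma IsUnit.cfcAbs {a : A} (ha : IsUnit a) : IsUnit (CFC.abs a) :=
  CFC.isUnit_sqrt_iff_isStrictlyPositive.mpr
    (IsStrictlyPositive.iff_of_unital.mpr ⟨star_mul_self_nonneg a, ha.star.mul ha⟩)

lemma algebraMap_sq_le_mul_self {b : A} {r : ℝ} (hr : 0 ≤ r) (hb : IsSelfAdjoint b)
    (h : algebraMap ℝ A r ≤ b) : algebraMap ℝ A (r ^ 2) ≤ b * b := by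
  rw [← cfc_id' ℝ b, ← cfc_mul _ _ b, algebraMap_le_cfc_iff _ _ _ (by fun_prop) hb]
  intro x hx
  have := (algebraMap_le_iff_le_spectrum hb).mp h x hx
  nlinarith

lemma algebraMap_le_conj_of_mem_unitary {u x : A} (hu : u ∈ unitary A) {c : ℝ}
    (h : algebraMap ℝ A c ≤ x) : algebraMap ℝ A c ≤ u * x * star u := by
  have hc : u * algebraMap ℝ A c * star u = algebraMap ℝ A c := by
    rw [← Algebra.commutes, mul_assoc, Unitary.mul_star_self_of_mem hu, mul_one]
  exact hc ▸ star_right_conjugate_le_conjugate h u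

lemma algebraMap_sq_le_unitary_mul {u b : A} (hu : u ∈ unitary A) (hb : IsSelfAdjoint b)
    {r : ℝ} (hr : 0 ≤ r) (h : algebraMap ℝ A r ≤ b) :
    algebraMap ℝ A (r ^ 2) ≤ star (u * b) * (u * b) ∧
      algebraMap ℝ A (r ^ 2) ≤ u * b * star (u * b) := by
  have hbb := algebraMap_sq_le_mul_self hr hb h
  rw [star_mul, hb.star_eq]
  constructor
  · rwa [mul_assoc, ← mul_assoc (star u), Unitary.star_mul_self_of_mem hu, one_mul]
  · rw [mul_assoc, ← mul_assoc b, ← mul_assoc]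
    exact algebraMap_le_conj_of_mem_unitary hu hbb

noncomputable def polarPhase (a : A) : A := a * Ring.inverse (CFC.abs a)

lemma polarPhase_mul_cfcAbs {a : A} (ha : IsUnit a) : polarPhase a * CFC.abs a = a := by
  rw [polarPhase, mul_assoc, Ring.inverse_mul_cancel _ ha.cfcAbs, mul_one]

lemma polarPhase_mem_unitary {a : A} (ha : IsUnit a) : polarPhase a ∈ unitary A := by
  have habs := ha.cfcAbs
  have hinv : IsSelfAdjoint (Ring.inverse (CFC.abs a)) :=
    (CFC.abs_nonneg a).isSelfAdjoint.ringInverse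
  refine (ha.mul habs.ringInverse).mem_unitary_of_star_mul_self ?_
  rw [star_mul, hinv.star_eq, mul_assoc, ← mul_assoc (star a), ← CFC.abs_mul_abs, mul_assoc,
    Ring.inverse_mul_cancel_left _ _ habs, Ring.mul_inverse_cancel _ habs]

lemma smul_polarPhase_add_smul {a : A} (ha : IsUnit a) (s t : ℝ) :
    s • polarPhase a + t • a = polarPhase a * (algebraMap ℝ A s + t • CFC.abs a) := by
  rw [mul_add, Algebra.algebraMap_eq_smul_one, mul_smul_comm, mul_one, mul_smul_comm,
    polarPhase_mul_cfcAbs ha]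

theorem phasePath_lower_bounds {a : A} (ha : IsUnit a) {ρ : ℝ} (hρ : 0 < ρ)
    (hlow : algebraMap ℝ A (ρ ^ 2) ≤ star a * a) {t : ℝ} (ht : 0 ≤ t) :
    algebraMap ℝ A (ρ ^ 2) ≤
        star (((1 - t) * ρ) • polarPhase a + t • a) * (((1 - t) * ρ) • polarPhase a + t • a) ∧
      algebraMap ℝ A (ρ ^ 2) ≤
        (((1 - t) * ρ) • polarPhase a + t • a) * star (((1 - t) * ρ) • polarPhase a + t • a) ∧
      IsUnit (((1 - t) * ρ) • polarPhase a + t • a) := by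
  have habs := algebraMap_le_cfcAbs hρ.le hlow
  set b := algebraMap ℝ A ((1 - t) * ρ) + t • CFC.abs a
  have hb : algebraMap ℝ A ρ ≤ b :=
    calc algebraMap ℝ A ρ = algebraMap ℝ A ((1 - t) * ρ) + t • algebraMap ℝ A ρ := by
          rw [Algebra.smul_def, ← map_mul, ← map_add]; ring_nf
      _ ≤ b := add_le_add_right (smul_le_smul_of_nonneg_left habs ht) _
  have hb_sa : IsSelfAdjoint b :=
    (IsSelfAdjoint.algebraMap A (.all _)).add
      ((IsSelfAdjoint.all t).smul (CFC.abs_nonneg a).isSelfAdjoint)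
  have hu := polarPhase_mem_unitary ha
  obtain ⟨h_star_mul_self, h_mul_star_self⟩ := algebraMap_sq_le_unitary_mul hu hb_sa hρ.le hb
  rw [smul_polarPhase_add_smul ha]
  exact ⟨h_star_mul_self, h_mul_star_self,
    (Unitary.isUnit_coe (U := ⟨_, hu⟩)).mul ((isStrictlyPositive_algebraMap hρ).of_le hb).isUnit⟩

end CStarAlgebra

theorem phase_path_lower_bound_general {E : Type*} [NormedAddCommGroup E] [InnerProductSpace ℂ E]
    [CompleteSpace E] (D₀ : E →L[ℂ] E) (hD₀inv : IsUnit D₀)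
    (ρ : ℝ) (hρ : 0 < ρ)
    (hD₀low : ((ρ ^ 2 : ℝ) : ℂ) • (1 : E →L[ℂ] E) ≤ ContinuousLinearMap.adjoint D₀ * D₀) :
    D₀ * Ring.inverse (cfc Real.sqrt (ContinuousLinearMap.adjoint D₀ * D₀)) ∈
      unitary (E →L[ℂ] E) ∧
    ∀ t ∈ Set.Icc (0 : ℝ) 1,
      (((ρ ^ 2 : ℝ) : ℂ) • (1 : E →L[ℂ] E) ≤
        ContinuousLinearMap.adjoint
            ((((1 - t) * ρ : ℝ) : ℂ) •
                (D₀ * Ring.inverse (cfc Real.sqrt (ContinuousLinearMap.adjoint D₀ * D₀))) +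
              (t : ℂ) • D₀) *
          ((((1 - t) * ρ : ℝ) : ℂ) •
              (D₀ * Ring.inverse (cfc Real.sqrt (ContinuousLinearMap.adjoint D₀ * D₀))) +
            (t : ℂ) • D₀)) ∧
      (((ρ ^ 2 : ℝ) : ℂ) • (1 : E →L[ℂ] E) ≤
        ((((1 - t) * ρ : ℝ) : ℂ) •
              (D₀ * Ring.inverse (cfc Real.sqrt (ContinuousLinearMap.adjoint D₀ * D₀))) +
            (t : ℂ) • D₀) *
          ContinuousLinearMap.adjoint
            ((((1 - t) * ρ : ℝ) : ℂ) •
                (D₀ * Ring.inverse (cfc Real.sqrt (ContinuousLinearMap.adjoint D₀ * D₀))) +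
              (t : ℂ) • D₀)) ∧
      IsUnit
        ((((1 - t) * ρ : ℝ) : ℂ) •
            (D₀ * Ring.inverse (cfc Real.sqrt (ContinuousLinearMap.adjoint D₀ * D₀))) +
          (t : ℂ) • D₀) := by
  simp only [← ContinuousLinearMap.star_eq_adjoint, cfc_sqrt_star_mul_self_eq_cfcAbs,
    Complex.coe_smul, ← Algebra.algebraMap_eq_smul_one] at hD₀low ⊢
  exact ⟨polarPhase_mem_unitary hD₀inv,
    fun t ht => phasePath_lower_bounds hD₀inv hρ hD₀low ht.1⟩

/-- For a bounded normal invertible operator `D₀` with `D₀*D₀ ≥ ρ²·1`, the phase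
`F = D₀|D₀|⁻¹` (with `|D₀| = √(D₀*D₀)` given by the continuous functional calculus) is
unitary, and for every `λ ∈ [0,1]` the operator `X_λ = (1−λ)ρF + λD₀` satisfies
`X_λ*X_λ ≥ ρ²·1` and `X_λX_λ* ≥ ρ²·1`; in particular `X_λ` is invertible. -/
theorem phase_path_lower_bound {E : Type*} [NormedAddCommGroup E] [InnerProductSpace ℂ E]
    [CompleteSpace E] (D₀ : E →L[ℂ] E) (hD₀ : IsStarNormal D₀) (hD₀inv : IsUnit D₀)
    (ρ : ℝ) (hρ : 0 < ρ)
    (hD₀low : ((ρ ^ 2 : ℝ) : ℂ) • (1 : E →L[ℂ] E) ≤ ContinuousLinearMap.adjoint D₀ * D₀) :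
    D₀ * Ring.inverse (cfc Real.sqrt (ContinuousLinearMap.adjoint D₀ * D₀)) ∈
      unitary (E →L[ℂ] E) ∧
    ∀ t ∈ Set.Icc (0 : ℝ) 1,
      (((ρ ^ 2 : ℝ) : ℂ) • (1 : E →L[ℂ] E) ≤
        ContinuousLinearMap.adjoint
            ((((1 - t) * ρ : ℝ) : ℂ) •
                (D₀ * Ring.inverse (cfc Real.sqrt (ContinuousLinearMap.adjoint D₀ * D₀))) +
              (t : ℂ) • D₀) *
          ((((1 - t) * ρ : ℝ) : ℂ) •
              (D₀ * Ring.inverse (cfc Real.sqrt (ContinuousLinearMap.adjoint D₀ * D₀))) +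
            (t : ℂ) • D₀)) ∧
      (((ρ ^ 2 : ℝ) : ℂ) • (1 : E →L[ℂ] E) ≤
        ((((1 - t) * ρ : ℝ) : ℂ) •
              (D₀ * Ring.inverse (cfc Real.sqrt (ContinuousLinearMap.adjoint D₀ * D₀))) +
            (t : ℂ) • D₀) *
          ContinuousLinearMap.adjoint
            ((((1 - t) * ρ : ℝ) : ℂ) •
                (D₀ * Ring.inverse (cfc Real.sqrt (ContinuousLinearMap.adjoint D₀ * D₀))) +
              (t : ℂ) • D₀)) ∧
      IsUnit
        ((((1 - t) * ρ : ℝ) : ℂ) •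
            (D₀ * Ring.inverse (cfc Real.sqrt (ContinuousLinearMap.adjoint D₀ * D₀))) +
          (t : ℂ) • D₀) :=
  phase_path_lower_bound_general D₀ hD₀inv ρ hρ hD₀low
end

section
/- Let E be a complex Hilbert space, let D be a bounded selfadjoint operator on E, let ρ > 0, and let f : ℝ → ℝ be a continuous function with 0 ≤ f(x) ≤ 1 for all x and f(x) = 1 whenever |x| ≤ ρ/2. Then for all g > 0 and κ > 0, the operator inequality g²·f(D)² + κ²·D² ≥ min(g², κ²ρ²/4)·1 holds, where f(D) is defined by the continuous functional calculus. -/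
/-- Core positivity mechanism of the gap theorem: if `D` is bounded selfadjoint, `ρ > 0` and
`f : ℝ → ℝ` is continuous with `0 ≤ f ≤ 1` and `f(x) = 1` for `|x| ≤ ρ/2`, then for all
`g, κ > 0` one has `g²·f(D)² + κ²·D² ≥ min(g², κ²ρ²/4)·1`. -/
theorem tapering_positivity {E : Type*} [NormedAddCommGroup E] [InnerProductSpace ℂ E]
    [CompleteSpace E] (D : E →L[ℂ] E) (hD : IsSelfAdjoint D) (ρ : ℝ) (hρ : 0 < ρ)
    (f : ℝ → ℝ) (hf : Continuous f) (hf01 : ∀ x, 0 ≤ f x ∧ f x ≤ 1)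
    (hf1 : ∀ x, |x| ≤ ρ / 2 → f x = 1) :
    ∀ g κ : ℝ, 0 < g → 0 < κ →
      ((min (g ^ 2) (κ ^ 2 * ρ ^ 2 / 4) : ℝ) : ℂ) • (1 : E →L[ℂ] E) ≤
        ((g ^ 2 : ℝ) : ℂ) • (cfc f D) ^ 2 + ((κ ^ 2 : ℝ) : ℂ) • D ^ 2 := by
  intro g κ hg hκ
  set m : ℝ := min (g ^ 2) (κ ^ 2 * ρ ^ 2 / 4) with hm
  have key : ∀ x : ℝ, m ≤ g ^ 2 * f x ^ 2 + κ ^ 2 * x ^ 2 := by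
    intro x
    rcases le_or_gt |x| (ρ / 2) with h | h
    · have h1 : f x = 1 := hf1 x h
      have : g ^ 2 ≤ g ^ 2 * f x ^ 2 + κ ^ 2 * x ^ 2 := by rw [h1]; nlinarith [sq_nonneg x, sq_nonneg κ, mul_nonneg (sq_nonneg κ) (sq_nonneg x)]
      exact le_trans (min_le_left _ _) this
    · have hx2 : ρ ^ 2 / 4 ≤ x ^ 2 := by
        have := sq_abs x
        nlinarith [sq_abs x, abs_nonneg x]
      have : κ ^ 2 * ρ ^ 2 / 4 ≤ g ^ 2 * f x ^ 2 + κ ^ 2 * x ^ 2 := by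
        nlinarith [(hf01 x).1, sq_nonneg (f x), sq_nonneg g, sq_nonneg κ]
      exact le_trans (min_le_right _ _) this
  -- rewrite everything as cfc
  have hco : Complex.ofReal m • (1 : E →L[ℂ] E) = m • (1 : E →L[ℂ] E) := Complex.coe_smul m 1
  rw [hco, show ((g ^ 2 : ℝ) : ℂ) • (cfc f D) ^ 2 = (g^2 : ℝ) • (cfc f D)^2 from Complex.coe_smul _ _,
      show ((κ ^ 2 : ℝ) : ℂ) • D ^ 2 = (κ^2 : ℝ) • D^2 from Complex.coe_smul _ _]
  have h1 : (m : ℝ) • (1 : E →L[ℂ] E) = cfc (fun _ : ℝ => m) D := by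
    rw [cfc_const m D, Algebra.algebraMap_eq_smul_one]
  have h2 : (g^2 : ℝ) • (cfc f D)^2 = cfc (fun x => g^2 * f x ^ 2) D := by
    rw [← cfc_pow f 2 (ha := hD), ← cfc_smul (g^2) _ D]
    simp [smul_eq_mul]
  have h3 : (κ^2 : ℝ) • D^2 = cfc (fun x => κ^2 * x ^ 2) D := by
    conv_lhs => rw [← cfc_id ℝ D]
    rw [← cfc_pow _ 2 (ha := hD), ← cfc_smul (κ^2) _ D]
    simp [smul_eq_mul]
  rw [h1, h2, h3, ← cfc_add D _ _ (by fun_prop) (by fun_prop)]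
  exact cfc_mono (fun x _ => key x)
end

section
/- Let E be a complex Hilbert space, let H be a bounded selfadjoint invertible operator on E, and let P be a finite-rank orthogonal projection on E. Then for every ε > 0 there exists a bounded selfadjoint operator H̃ on E such that: (i) H − H̃ has finite rank; (ii) ‖H − H̃‖ ≤ ε; (iii) the compression of H̃ to the range of P (i.e., the restriction of PH̃P to Ran(P), as a linear endomorphism of Ran(P)) is invertible, and the compression of H̃ to the orthogonal complement of Ran(P) (i.e., the restriction of (1−P)H̃(1−P) to Ran(P)^⊥) is invertible. -/
/-!
Write `V = Ran P`. The compression of `H` to `V` lives on a finite-dimensional space, and the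
compression `A` of `H` to `Vᗮ` has closed range, since that range is `(H(Vᗮ) + V) ∩ Vᗮ`, and a
finite-dimensional kernel, which `H` maps injectively into `V`. A selfadjoint operator `A` with
closed range satisfies `Ran A = (ker A)ᗮ`, so `A + δ Π_{ker A}` is bijective for every `δ ≠ 0`.
Adding `ε/2` times the projection onto the kernel of each of the two compressions, placed on
the corresponding summand of `E = V ⊕ Vᗮ`, makes both compressions invertible while changing `H`
by a selfadjoint operator of finite rank and norm at most `ε`.
-/

section

open ContinuousLinearMap

variable {𝕜 : Type*} [RCLike 𝕜] {E : Type*} [NormedAddCommGroup E] [InnerProductSpace 𝕜 E]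

section ClosedRange

variable {F : Type*} [NormedAddCommGroup F] [InnerProductSpace 𝕜 F] [CompleteSpace F]

theorem IsSelfAdjoint.range_eq_orthogonal_ker {A : F →L[𝕜] F} (hA : IsSelfAdjoint A)
    (hrange : IsClosed (A.range : Set F)) : A.range = A.kerᗮ := by
  have : CompleteSpace A.range := hrange.completeSpace_coe
  rw [← hA.isSymmetric.orthogonal_range, Submodule.orthogonal_orthogonal]

theorem IsSelfAdjoint.bijective_add_smul_starProjection_ker {A : F →L[𝕜] F}
    (hA : IsSelfAdjoint A) (hrange : IsClosed (A.range : Set F)) {δ : 𝕜} (hδ : δ ≠ 0) :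
    Function.Bijective (A + δ • A.ker.starProjection) := by
  have hidem (x : F) : A.ker.starProjection (A.ker.starProjection x) = A.ker.starProjection x :=
    A.ker.starProjection_eq_self_iff.2 (A.ker.starProjection_apply_mem x)
  have hker (x : F) : A (A.ker.starProjection x) = 0 := A.ker.starProjection_apply_mem x
  refine ⟨(injective_iff_map_eq_zero _).2 fun x hx => ?_, fun z => ?_⟩
  · have hAx_ker : A x ∈ A.ker := by
      have hx' : A x = -(δ • A.ker.starProjection x) := eq_neg_of_add_eq_zero_left hx
      rw [hx']
      exact A.ker.neg_mem (A.ker.smul_mem δ (A.ker.starProjection_apply_mem x))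
    have hAx_perp : A x ∈ A.kerᗮ := by
      rw [← hA.range_eq_orthogonal_ker hrange]
      exact LinearMap.mem_range_self _ x
    have hAx : A x = 0 := Submodule.disjoint_def.1 A.ker.orthogonal_disjoint _ hAx_ker hAx_perp
    have hPx : A.ker.starProjection x = 0 := by
      simpa [hAx, hδ] using hx
    rwa [A.ker.starProjection_eq_self_iff.2 hAx] at hPx
  · obtain ⟨y, hy⟩ : z - A.ker.starProjection z ∈ A.range := by
      rw [hA.range_eq_orthogonal_ker hrange]
      exact A.ker.sub_starProjection_mem_orthogonal z
    refine ⟨y - A.ker.starProjection y + δ⁻¹ • A.ker.starProjection z, ?_⟩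
    rw [coe_coe] at hy
    simp [hker, hy, hδ, hidem]

end ClosedRange

namespace Submodule

variable (U : Submodule 𝕜 E) [U.HasOrthogonalProjection]

noncomputable def compression (T : E →L[𝕜] E) : U →L[𝕜] U :=
  U.orthogonalProjectionOnto ∘L T ∘L U.subtypeL

noncomputable def zeroExtension (S : U →L[𝕜] U) : E →L[𝕜] E :=
  U.subtypeL ∘L S ∘L U.orthogonalProjectionOnto

variable {U}

@[simp]
theorem coe_compression_apply (T : E →L[𝕜] E) (x : U) :
    (U.compression T x : E) = U.starProjection (T x) := rfl

theorem compression_add (T₁ T₂ : E →L[𝕜] E) :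
    U.compression (T₁ + T₂) = U.compression T₁ + U.compression T₂ := by
  ext x; simp

@[simp]
theorem compression_zeroExtension (S : U →L[𝕜] U) : U.compression (U.zeroExtension S) = S := by
  ext x; simp [compression, zeroExtension]

theorem compression_zeroExtension_of_isOrtho {W : Submodule 𝕜 E} [W.HasOrthogonalProjection]
    (h : U ⟂ W) (S : U →L[𝕜] U) : W.compression (U.zeroExtension S) = 0 := by
  simp only [compression, zeroExtension, ← comp_assoc,
    h.symm.orthogonalProjectionOnto_comp_subtypeL, zero_comp]

theorem norm_zeroExtension_le (S : U →L[𝕜] U) : ‖U.zeroExtension S‖ ≤ ‖S‖ :=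
  calc ‖U.zeroExtension S‖ ≤ ‖U.subtypeL‖ * (‖S‖ * ‖U.orthogonalProjectionOnto‖) :=
        (opNorm_comp_le _ _).trans (by gcongr; exact opNorm_comp_le _ _)
    _ ≤ 1 * (‖S‖ * 1) := by
        gcongr
        exacts [U.norm_subtypeL_le, U.orthogonalProjectionOnto_norm_le]
    _ = ‖S‖ := by ring

theorem range_zeroExtension_le (S : U →L[𝕜] U) :
    (U.zeroExtension S).range ≤ S.range.map U.subtype := by
  rintro _ ⟨x, rfl⟩
  exact ⟨_, ⟨_, rfl⟩, rfl⟩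

section Complete

variable [CompleteSpace E] [CompleteSpace U]

theorem _root_.IsSelfAdjoint.compression {T : E →L[𝕜] E} (hT : IsSelfAdjoint T) :
    IsSelfAdjoint (U.compression T) := by
  have h := hT.conj_adjoint U.orthogonalProjectionOnto
  rwa [U.adjoint_orthogonalProjectionOnto] at h

theorem _root_.IsSelfAdjoint.zeroExtension {S : U →L[𝕜] U} (hS : IsSelfAdjoint S) :
    IsSelfAdjoint (U.zeroExtension S) := by
  have h := hS.adjoint_conj U.orthogonalProjectionOnto
  rwa [U.adjoint_orthogonalProjectionOnto] at h

end Complete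

theorem finiteDimensional_ker_compression_orthogonal [FiniteDimensional 𝕜 U]
    {T : E →L[𝕜] E} (hT : Function.Injective T) :
    FiniteDimensional 𝕜 (Uᗮ.compression T).ker := by
  have hmem (x : (Uᗮ.compression T).ker) : T x ∈ U := by
    have h : T x ∈ Uᗮᗮ := orthogonalProjectionOnto_eq_zero_iff.1 x.2
    rwa [U.orthogonal_orthogonal] at h
  refine Module.Finite.of_injective
    (LinearMap.codRestrict U ((T : E →ₗ[𝕜] E) ∘ₗ Uᗮ.subtype ∘ₗ (Uᗮ.compression T).ker.subtype)
      hmem) fun x y hxy => ?_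
  exact Subtype.ext (Subtype.ext (hT (congrArg Subtype.val hxy)))

theorem isClosed_range_compression_orthogonal [FiniteDimensional 𝕜 U]
    {T : E →L[𝕜] E} (hT : IsClosedMap T) :
    IsClosed ((Uᗮ.compression T).range : Set Uᗮ) := by
  -- the range of the compression is `(T(Uᗮ) + U) ∩ Uᗮ`
  have hrange : ((Uᗮ.compression T).range : Set Uᗮ) =
      Subtype.val ⁻¹' ((Uᗮ.map (T : E →ₗ[𝕜] E) ⊔ U : Submodule 𝕜 E) : Set E) := by
    ext y
    simp only [Set.mem_preimage, SetLike.mem_coe, LinearMap.mem_range, coe_coe]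
    constructor
    · rintro ⟨x, rfl⟩
      rw [coe_compression_apply, starProjection_orthogonal, sub_apply, id_apply]
      exact sub_mem (mem_sup_left ⟨x, x.2, rfl⟩) (mem_sup_right (U.starProjection_apply_mem _))
    · intro hy
      obtain ⟨_, ⟨x, hx, rfl⟩, u, hu, hxu⟩ := mem_sup.1 hy
      refine ⟨⟨x, hx⟩, Subtype.ext ?_⟩
      rw [coe_compression_apply, ← starProjection_eq_self_iff.2 y.2, ← hxu]
      simp [starProjection_eq_self_iff.2 hu]
  have hclosed : IsClosed (Uᗮ.map (T : E →ₗ[𝕜] E) : Set E) := by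
    rw [map_coe]
    exact hT _ U.isClosed_orthogonal
  rw [hrange]
  exact (isClosed_sup_finiteDimensional _ U hclosed).preimage continuous_subtype_val

/-- Stated for any `P` equal to the projection, so that it applies when `U` is the range of `P`. -/
theorem exists_isUnit_restrict_of_bijective_compression {P T : E →L[𝕜] E}
    (hP : P = U.starProjection) (hT : Function.Bijective (U.compression T)) :
    ∃ h : ∀ x ∈ U, ((P * T * P : E →L[𝕜] E) : E →ₗ[𝕜] E) x ∈ U,
      IsUnit (LinearMap.restrict ((P * T * P : E →L[𝕜] E) : E →ₗ[𝕜] E) h) := by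
  subst hP
  refine ⟨fun x _ => U.starProjection_apply_mem _, ?_⟩
  have hrestrict : LinearMap.restrict ((U.starProjection * T * U.starProjection : E →L[𝕜] E) :
      E →ₗ[𝕜] E) (fun x _ => U.starProjection_apply_mem _) = (U.compression T : U →ₗ[𝕜] U) := by
    ext x
    simp [starProjection_eq_self_iff.2 x.2]
  rw [hrestrict, Module.End.isUnit_iff]
  exact hT

section KernelShift

variable (U) [CompleteSpace U]

noncomputable def kernelShift (T : E →L[𝕜] E) (δ : ℝ) : E →L[𝕜] E :=
  U.zeroExtension ((δ : 𝕜) • (U.compression T).ker.starProjection)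

variable {U}

theorem isSelfAdjoint_kernelShift [CompleteSpace E] (T : E →L[𝕜] E) (δ : ℝ) :
    IsSelfAdjoint (U.kernelShift T δ) :=
  (IsSelfAdjoint.smul (RCLike.conj_ofReal δ) (isSelfAdjoint_starProjection _)).zeroExtension

theorem norm_kernelShift_le (T : E →L[𝕜] E) (δ : ℝ) : ‖U.kernelShift T δ‖ ≤ |δ| :=
  calc ‖U.kernelShift T δ‖ ≤ ‖(δ : 𝕜)‖ * ‖(U.compression T).ker.starProjection‖ :=
        (norm_zeroExtension_le _).trans (norm_smul _ _).le
    _ ≤ |δ| * 1 := by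
        rw [RCLike.norm_ofReal]
        gcongr
        exact starProjection_norm_le _
    _ = |δ| := mul_one _

theorem finiteDimensional_range_kernelShift (T : E →L[𝕜] E) (δ : ℝ)
    [FiniteDimensional 𝕜 (U.compression T).ker] :
    FiniteDimensional 𝕜 (U.kernelShift T δ).range := by
  have hle : (U.kernelShift T δ).range ≤ (U.compression T).ker.map U.subtype := by
    refine (range_zeroExtension_le _).trans (map_mono ?_)
    rintro _ ⟨x, rfl⟩
    exact (U.compression T).ker.smul_mem _ ((U.compression T).ker.starProjection_apply_mem x)
  exact Submodule.finiteDimensional_of_le hle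

theorem bijective_compression_add_kernelShift [CompleteSpace E] {T R : E →L[𝕜] E}
    (hT : IsSelfAdjoint T) (hrange : IsClosed ((U.compression T).range : Set U))
    (hR : U.compression R = 0) {δ : ℝ} (hδ : δ ≠ 0) :
    Function.Bijective (U.compression (T + U.kernelShift T δ + R)) := by
  rw [compression_add, compression_add, hR, add_zero, kernelShift, compression_zeroExtension]
  exact hT.compression.bijective_add_smul_starProjection_ker hrange (RCLike.ofReal_ne_zero.2 hδ)

end KernelShift

theorem exists_finiteRank_perturbation_bijective_compressions [CompleteSpace E]
    (U : Submodule 𝕜 E) [FiniteDimensional 𝕜 U] {H : E →L[𝕜] E} (hH : IsSelfAdjoint H)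
    (hHinv : IsUnit H) {ε : ℝ} (hε : 0 < ε) :
    ∃ Ht : E →L[𝕜] E, IsSelfAdjoint Ht ∧ FiniteDimensional 𝕜 (H - Ht).range ∧ ‖H - Ht‖ ≤ ε ∧
      Function.Bijective (U.compression Ht) ∧ Function.Bijective (Uᗮ.compression Ht) := by
  obtain ⟨u, rfl⟩ := hHinv
  have hinj : Function.Injective (u : E →L[𝕜] E) :=
    (ContinuousLinearEquiv.unitsEquiv 𝕜 E u).injective
  have hclosed : IsClosedMap (u : E →L[𝕜] E) :=
    (ContinuousLinearEquiv.unitsEquiv 𝕜 E u).toHomeomorph.isClosedMap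
  have := finiteDimensional_ker_compression_orthogonal (U := U) hinj
  have hδ : ε / 2 ≠ 0 := by positivity
  have hdiff : (u : E →L[𝕜] E) - (u + U.kernelShift u (ε / 2) + Uᗮ.kernelShift u (ε / 2)) =
      -(U.kernelShift u (ε / 2) + Uᗮ.kernelShift u (ε / 2)) := by abel
  refine ⟨u + U.kernelShift u (ε / 2) + Uᗮ.kernelShift u (ε / 2), ?_, ?_, ?_, ?_, ?_⟩
  · exact (hH.add (isSelfAdjoint_kernelShift _ _)).add (isSelfAdjoint_kernelShift _ _)
  · have := finiteDimensional_range_kernelShift (U := U) u (ε / 2)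
    have := finiteDimensional_range_kernelShift (U := Uᗮ) u (ε / 2)
    rw [hdiff, toLinearMap_neg, LinearMap.range_neg, toLinearMap_add]
    exact Submodule.finiteDimensional_of_le (LinearMap.range_add_le _ _)
  · rw [hdiff, norm_neg]
    calc _ ≤ |ε / 2| + |ε / 2| :=
          norm_add_le_of_le (norm_kernelShift_le _ _) (norm_kernelShift_le _ _)
      _ = ε := by rw [abs_of_pos (half_pos hε), add_halves]
  · exact bijective_compression_add_kernelShift hH (closed_of_finiteDimensional _)
      (compression_zeroExtension_of_isOrtho U.isOrtho_orthogonal_left _) hδ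
  · rw [add_right_comm]
    exact bijective_compression_add_kernelShift hH (isClosed_range_compression_orthogonal hclosed)
      (compression_zeroExtension_of_isOrtho U.isOrtho_orthogonal_right _) hδ

end Submodule

end

/-- Lemma 7.2 (lem-HDecop2): given a bounded selfadjoint invertible `H` and a finite-rank
orthogonal projection `P`, for every `ε > 0` there is a selfadjoint `H̃` differing from `H` by
a finite-rank operator of norm at most `ε` such that both the compression of `H̃` to `Ran(P)`
(the restriction of `PH̃P`) and the compression of `H̃` to `Ran(P)ᗮ` (the restriction of
`(1−P)H̃(1−P)`) are invertible. -/
theorem small_finite_rank_perturbation_compressions_invertible {E : Type*}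
    [NormedAddCommGroup E] [InnerProductSpace ℂ E] [CompleteSpace E]
    (H P : E →L[ℂ] E) (hH : IsSelfAdjoint H) (hHinv : IsUnit H)
    (hP : IsSelfAdjoint P) (hP2 : P * P = P)
    (hPfin : FiniteDimensional ℂ (LinearMap.range (P : E →ₗ[ℂ] E))) :
    ∀ ε > (0 : ℝ), ∃ Ht : E →L[ℂ] E, IsSelfAdjoint Ht ∧
      FiniteDimensional ℂ (LinearMap.range ((H - Ht : E →L[ℂ] E) : E →ₗ[ℂ] E)) ∧ ‖H - Ht‖ ≤ ε ∧
      (∃ h₁ : ∀ x ∈ LinearMap.range (P : E →ₗ[ℂ] E),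
          (((P * Ht * P : E →L[ℂ] E) : E →ₗ[ℂ] E)) x ∈ LinearMap.range (P : E →ₗ[ℂ] E),
        IsUnit (LinearMap.restrict (((P * Ht * P : E →L[ℂ] E) : E →ₗ[ℂ] E)) h₁)) ∧
      (∃ h₂ : ∀ x ∈ (LinearMap.range (P : E →ₗ[ℂ] E))ᗮ,
          ((((1 - P) * Ht * (1 - P) : E →L[ℂ] E) : E →ₗ[ℂ] E)) x ∈ (LinearMap.range (P : E →ₗ[ℂ] E))ᗮ,
        IsUnit (LinearMap.restrict ((((1 - P) * Ht * (1 - P) : E →L[ℂ] E) : E →ₗ[ℂ] E)) h₂)) := by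
  intro ε hε
  obtain ⟨_, hPU⟩ := isStarProjection_iff_eq_starProjection_range.mp ⟨hP2, hP⟩
  obtain ⟨Ht, hHt, hfin, hnorm, hU, hUperp⟩ :=
    Submodule.exists_finiteRank_perturbation_bijective_compressions (LinearMap.range (P : E →ₗ[ℂ] E))
      hH hHinv hε
  have hPperp : 1 - P = (LinearMap.range (P : E →ₗ[ℂ] E))ᗮ.starProjection := by
    rw [Submodule.starProjection_orthogonal', ← hPU]
  exact ⟨Ht, hHt, hfin, hnorm, Submodule.exists_isUnit_restrict_of_bijective_compression hPU hU,
    Submodule.exists_isUnit_restrict_of_bijective_compression hPperp hUperp⟩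
end
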